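/- arXiv:2010.16384 — 3 statements merged into one kernel-verified Lean document; each statement's English description precedes it below -/
import Mathlib

section
/- Let F be the class of mechanisms φ^v for vectors v ∈ ℝ^n satisfying 0 ≤ v[k] ≤ 1/(n(n−1)) for all k, v[k] ≥ v[k+1] for all k ∈ {1,…,n−1}, and v[n] = 0. A mechanism φ^v ∈ F is Pareto-efficient in F — i.e., there is no vector u satisfying the same constraints such that φ^u dominates φ^v — if and only if v[1] = 1/(n(n−1)). -/
open Finset

/-- A preference over `n` objects, encoded by its rank function:
`r a` is the (0-based) rank of object `a`; object `a` is strictly preferred to `b`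
iff `r a < r b`.  The `k`-th ranked object (0-based) is `r.symm k`. -/
abbrev Pref (n : ℕ) := Fin n ≃ Fin n

/-- The total probability that allocation `p` assigns to the upper contour set of `a`
(the objects weakly preferred to `a`) under preference `r`. -/
def upperSum {n : ℕ} (r : Pref n) (p : Fin n → ℝ) (a : Fin n) : ℝ :=
  ∑ o ∈ Finset.univ.filter (fun o => r o ≤ r a), p o

/-- First-order stochastic dominance of `p` over `q` with respect to preference `r`. -/
def StochDom {n : ℕ} (r : Pref n) (p q : Fin n → ℝ) : Prop :=
  ∀ a : Fin n, upperSum r q a ≤ upperSum r p a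

/-- A random assignment: a doubly stochastic matrix. -/
def IsRandomAssignment {n : ℕ} (P : Matrix (Fin n) (Fin n) ℝ) : Prop :=
  (∀ i a, 0 ≤ P i a) ∧ (∀ i, ∑ a, P i a = 1) ∧ (∀ a, ∑ i, P i a = 1)

/-- A mechanism maps every preference profile to a random assignment. -/
def IsMechanism {n : ℕ} (φ : (Fin n → Pref n) → Matrix (Fin n) (Fin n) ℝ) : Prop :=
  ∀ prof, IsRandomAssignment (φ prof)

/-- Strategy-proofness: no agent can ever benefit (in the stochastic dominance sense)
from misreporting her preference. -/
def StrategyProof {n : ℕ} (φ : (Fin n → Pref n) → Matrix (Fin n) (Fin n) ℝ) : Prop :=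
  ∀ (prof : Fin n → Pref n) (i : Fin n) (r' : Pref n),
    StochDom (prof i) (φ prof i) (φ (Function.update prof i r') i)

/-- Envy-freeness: each agent's allocation stochastically dominates every other
agent's allocation with respect to her own preference. -/
def EnvyFree {n : ℕ} (φ : (Fin n → Pref n) → Matrix (Fin n) (Fin n) ℝ) : Prop :=
  ∀ (prof : Fin n → Pref n) (i j : Fin n), StochDom (prof i) (φ prof i) (φ prof j)

/-- The pairwise exchange mechanism induced by a transfer function `f`. -/
noncomputable def phiF {n : ℕ} (f : Pref n → Pref n → Fin n → ℝ) (prof : Fin n → Pref n) :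
    Matrix (Fin n) (Fin n) ℝ :=
  fun i a => 1 / (n : ℝ) + ∑ j ∈ Finset.univ.erase i, f (prof i) (prof j) a

/-- The transfer function takes values in `[-1/n, 1/n]`. -/
def TransferBounded {n : ℕ} (f : Pref n → Pref n → Fin n → ℝ) : Prop :=
  ∀ r r' a, -(1 / (n : ℝ)) ≤ f r r' a ∧ f r r' a ≤ 1 / (n : ℝ)

/-- The linear mechanism `φ^v` associated with a vector `v`. -/
noncomputable def phiV {n : ℕ} (v : Fin n → ℝ) : (Fin n → Pref n) → Matrix (Fin n) (Fin n) ℝ :=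
  phiF (fun r r' a => v (r a) - v (r' a))

/-- The constraints on the vector `v` of a linear mechanism. -/
def ValidV {n : ℕ} (hn : 0 < n) (v : Fin n → ℝ) : Prop :=
  (∀ k, 0 ≤ v k ∧ v k ≤ 1 / ((n : ℝ) * ((n : ℝ) - 1))) ∧
  (∀ (k : ℕ) (h : k + 1 < n), v ⟨k + 1, h⟩ ≤ v ⟨k, Nat.lt_of_succ_lt h⟩) ∧
  v ⟨n - 1, Nat.sub_lt hn Nat.one_pos⟩ = 0

/-- `φ` weakly dominates `φ'`. -/
def WeaklyDominates {n : ℕ}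
    (φ φ' : (Fin n → Pref n) → Matrix (Fin n) (Fin n) ℝ) : Prop :=
  ∀ (prof : Fin n → Pref n) (i : Fin n), StochDom (prof i) (φ prof i) (φ' prof i)

/-- `φ` (strictly) dominates `φ'`. -/
def Dominates {n : ℕ}
    (φ φ' : (Fin n → Pref n) → Matrix (Fin n) (Fin n) ℝ) : Prop :=
  WeaklyDominates φ φ' ∧
    ∃ (prof : Fin n → Pref n) (i : Fin n) (a : Fin n),
      upperSum (prof i) (φ' prof i) a < upperSum (prof i) (φ prof i) a

/-! Write `D = u - v`. For agent `i` and an object of rank `c` in her preference, the gain of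
`φ^u` over `φ^v` on the upper contour set is a sum over the other agents `j` of
`∑_{t ≤ c} D t - ∑_{t ≤ c} D (σⱼ t)` for some permutation `σⱼ`. When `D` is antitone every term
is nonnegative, because the prefix sums of an antitone sequence dominate all sums of equally many
of its terms. Conversely, if agent `i` reports the natural order and every other agent swaps
`m < s`, the gain at `m` is `(n - 1) (D m - D s)`. Hence `φ^u` dominates `φ^v` iff `D` is
antitone and not constant. Raising `v 0` to the cap `1/(n(n-1))` produces such a `D` whenever
`v 0` is below the cap; when `v 0` is at the cap, every admissible `u` has
`D 0 ≤ 0 = D (n - 1)`, so an antitone `D` is constant. -/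

namespace Finset

variable {α β : Type*} [LinearOrder α] [LocallyFiniteOrderBot α]

theorem sum_le_sum_Iic_of_antitone [AddCommMonoid β] [PartialOrder β]
    [IsOrderedCancelAddMonoid β] {f : α → β} (hf : Antitone f) (c : α) {s : Finset α} (hs : #s = #(Iic c)) :
    ∑ x ∈ s, f x ≤ ∑ x ∈ Iic c, f x := by
  classical
  rw [← sum_sdiff_le_sum_sdiff]
  calc ∑ x ∈ s \ Iic c, f x ≤ #(s \ Iic c) • f c :=
        sum_le_card_nsmul _ _ _ fun x hx ↦ hf (le_of_lt (by simpa using (mem_sdiff.1 hx).2))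
    _ = #(Iic c \ s) • f c := by rw [card_sdiff_comm hs]
    _ ≤ ∑ x ∈ Iic c \ s, f x :=
        card_nsmul_le_sum _ _ _ fun x hx ↦ hf (mem_Iic.1 (mem_sdiff.1 hx).1)

theorem sum_Iic_comp_le_of_antitone [AddCommMonoid β] [PartialOrder β]
    [IsOrderedCancelAddMonoid β] {f : α → β} (hf : Antitone f) {g : α → α} (hg : g.Injective) (c : α) :
    ∑ x ∈ Iic c, f (g x) ≤ ∑ x ∈ Iic c, f x := by
  classical
  rw [← sum_image hg.injOn]
  exact sum_le_sum_Iic_of_antitone hf c (card_image_of_injective _ hg)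

theorem sum_Iic_comp_swap [AddCommGroup β] (f : α → β) {a b : α} (hab : a < b) :
    ∑ x ∈ Iic a, f (Equiv.swap a b x) = ∑ x ∈ Iic a, f x - f a + f b := by
  classical
  have hfix : ∀ x ∈ Iio a, f (Equiv.swap a b x) = f x := fun x hx ↦ by
    have hxa := mem_Iio.1 hx
    rw [Equiv.swap_apply_of_ne_of_ne hxa.ne (hxa.trans hab).ne]
  rw [← Iio_insert, sum_insert notMem_Iio_self, sum_insert notMem_Iio_self,
    Equiv.swap_apply_left, sum_congr rfl hfix]
  abel

end Finset

theorem antitone_update_sub_of_isMin {α β : Type*} [PartialOrder α] [DecidableEq α]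
    [AddCommGroup β] [PartialOrder β] [IsOrderedAddMonoid β] {f : α → β} {a : α} (ha : IsMin a)
    {c : β} (hc : f a ≤ c) : Antitone (Function.update f a c - f) := by
  intro x y hxy
  rcases eq_or_ne y a with rfl | hy
  · rw [ha.eq_of_le hxy]
  · rcases eq_or_ne x a with rfl | hx
    · simp [hy, hc]
    · simp [hx, hy]

section LinearMechanism

variable {n : ℕ}

theorem upperSum_eq_sum_Iic (r : Pref n) (p : Fin n → ℝ) (a : Fin n) :
    upperSum r p a = ∑ t ∈ Iic (r a), p (r.symm t) :=
  sum_equiv r (fun o ↦ by simp) (fun o _ ↦ by simp)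

theorem upperSum_sub (r : Pref n) (p q : Fin n → ℝ) (a : Fin n) :
    upperSum r p a - upperSum r q a = upperSum r (p - q) a := by
  simp only [upperSum, Pi.sub_apply, sum_sub_distrib]

theorem phiV_sub_phiV_apply (u v : Fin n → ℝ) (prof : Fin n → Pref n) (i a : Fin n) :
    phiV u prof i a - phiV v prof i a
      = ∑ j ∈ univ.erase i, ((u - v) (prof i a) - (u - v) (prof j a)) := by
  simp only [phiV, phiF, add_sub_add_left_eq_sub, ← sum_sub_distrib, Pi.sub_apply]
  exact sum_congr rfl fun j _ ↦ by ring

theorem upperSum_phiV_sub_phiV (u v : Fin n → ℝ) (prof : Fin n → Pref n) (i a : Fin n) :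
    upperSum (prof i) (phiV u prof i) a - upperSum (prof i) (phiV v prof i) a
      = ∑ j ∈ univ.erase i, (∑ t ∈ Iic (prof i a), (u - v) t
          - ∑ t ∈ Iic (prof i a), (u - v) (prof j ((prof i).symm t))) := by
  rw [upperSum_sub, upperSum_eq_sum_Iic]
  simp only [Pi.sub_apply, phiV_sub_phiV_apply, Equiv.apply_symm_apply]
  rw [sum_comm]
  exact sum_congr rfl fun j _ ↦ sum_sub_distrib _ _

theorem weaklyDominates_phiV_of_antitone {u v : Fin n → ℝ} (h : Antitone (u - v)) :
    WeaklyDominates (phiV u) (phiV v) := fun prof i a ↦ by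
  rw [← sub_nonneg, upperSum_phiV_sub_phiV]
  exact sum_nonneg fun j _ ↦ sub_nonneg.2 <|
    sum_Iic_comp_le_of_antitone h ((prof j).injective.comp (prof i).symm.injective) _

def swapProfile (i m s : Fin n) : Fin n → Pref n :=
  Function.update (fun _ ↦ Equiv.swap m s) i (Equiv.refl _)

theorem upperSum_phiV_sub_phiV_swapProfile (u v : Fin n → ℝ) (i : Fin n) {m s : Fin n}
    (hms : m < s) :
    upperSum (swapProfile i m s i) (phiV u (swapProfile i m s) i) m
        - upperSum (swapProfile i m s i) (phiV v (swapProfile i m s) i) m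
      = ((n : ℝ) - 1) * ((u - v) m - (u - v) s) := by
  have hterm : ∀ j ∈ univ.erase i,
      ∑ t ∈ Iic (swapProfile i m s i m), (u - v) t
        - ∑ t ∈ Iic (swapProfile i m s i m),
            (u - v) (swapProfile i m s j ((swapProfile i m s i).symm t))
      = (u - v) m - (u - v) s := fun j hj ↦ by
    simp only [swapProfile, Function.update_self, Function.update_of_ne (ne_of_mem_erase hj),
      Equiv.refl_apply, Equiv.refl_symm, sum_Iic_comp_swap _ hms]
    abel
  rw [upperSum_phiV_sub_phiV, sum_congr rfl hterm, sum_const, card_erase_of_mem (mem_univ i),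
    card_univ, Fintype.card_fin, nsmul_eq_mul, Nat.cast_pred (Fin.pos i)]

theorem antitone_of_weaklyDominates_phiV {u v : Fin n → ℝ}
    (h : WeaklyDominates (phiV u) (phiV v)) : Antitone (u - v) := by
  refine antitone_iff_forall_lt.2 fun m s hms ↦ ?_
  have hdom := sub_nonneg.2 (h (swapProfile s m s) s m)
  rw [upperSum_phiV_sub_phiV_swapProfile u v s hms] at hdom
  have hn : (1 : ℝ) < n := by exact_mod_cast (show 1 < n by omega)
  nlinarith

theorem weaklyDominates_phiV_iff {u v : Fin n → ℝ} :
    WeaklyDominates (phiV u) (phiV v) ↔ Antitone (u - v) :=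
  ⟨antitone_of_weaklyDominates_phiV, weaklyDominates_phiV_of_antitone⟩

theorem dominates_phiV_iff {u v : Fin n → ℝ} :
    Dominates (phiV u) (phiV v) ↔ Antitone (u - v) ∧ ¬ Monotone (u - v) := by
  rw [Dominates, weaklyDominates_phiV_iff]
  refine and_congr_right fun _ ↦ ⟨?_, fun hnot ↦ ?_⟩
  · rintro ⟨prof, i, a, hlt⟩ hmono
    have hback : WeaklyDominates (phiV v) (phiV u) :=
      weaklyDominates_phiV_of_antitone (by rw [← neg_sub]; exact hmono.neg)
    exact (hback prof i a).not_gt hlt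
  · obtain ⟨m, s, hms, hlt⟩ : ∃ m s, m ≤ s ∧ (u - v) s < (u - v) m := by
      simpa only [Monotone, not_forall, not_le, exists_prop] using hnot
    have hms' : m < s := lt_of_le_of_ne hms (by rintro rfl; exact hlt.false)
    refine ⟨swapProfile s m s, s, m, sub_pos.1 ?_⟩
    rw [upperSum_phiV_sub_phiV_swapProfile u v s hms']
    have hn : (1 : ℝ) < n := by exact_mod_cast (show 1 < n by omega)
    exact mul_pos (by linarith) (by linarith)

theorem ValidV.update_zero {hn : 0 < n} {v : Fin n → ℝ} (hv : ValidV hn v) (h1 : 1 < n) :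
    ValidV hn (Function.update v ⟨0, hn⟩ (1 / ((n : ℝ) * ((n : ℝ) - 1)))) := by
  obtain ⟨hbound, hstep, hlast⟩ := hv
  refine ⟨fun k ↦ ?_, fun k hk ↦ ?_, ?_⟩
  · rcases eq_or_ne k ⟨0, hn⟩ with rfl | hk
    · rw [Function.update_self]
      exact ⟨(hbound ⟨0, hn⟩).1.trans (hbound ⟨0, hn⟩).2, le_rfl⟩
    · rw [Function.update_of_ne hk]
      exact hbound k
  · rw [Function.update_of_ne (by simp [Fin.ext_iff])]
    rcases Nat.eq_zero_or_pos k with rfl | hk0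
    · rw [Function.update_self]
      exact (hbound _).2
    · rw [Function.update_of_ne (by simp [Fin.ext_iff]; omega)]
      exact hstep k hk
  · rw [Function.update_of_ne (by simp [Fin.ext_iff]; omega)]
    exact hlast

end LinearMechanism

/-- A linear mechanism `φ^v` is Pareto-efficient within the class of linear
mechanisms iff `v[1] = 1/(n(n-1))`. -/
theorem linear_pareto_efficient_iff (n : ℕ) (hn : 3 ≤ n)
    (v : Fin n → ℝ) (hv : ValidV (by omega) v) :
    (¬ ∃ u : Fin n → ℝ, ValidV (by omega) u ∧ Dominates (phiV u) (phiV v)) ↔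
      v ⟨0, by omega⟩ = 1 / ((n : ℝ) * ((n : ℝ) - 1)) := by
  have hmin : IsMin (⟨0, by omega⟩ : Fin n) := fun b _ ↦ Nat.zero_le b
  simp only [dominates_phiV_iff, not_exists, not_and, not_not]
  constructor
  · intro hpareto
    by_contra hne
    have hlt : v ⟨0, by omega⟩ < 1 / ((n : ℝ) * ((n : ℝ) - 1)) := lt_of_le_of_ne (hv.1 _).2 hne
    have hmono := hpareto _ (hv.update_zero (by omega)) (antitone_update_sub_of_isMin hmin hlt.le)
      (show (⟨0, by omega⟩ : Fin n) ≤ ⟨1, by omega⟩ from Nat.zero_le 1)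
    have h10 : (⟨1, by omega⟩ : Fin n) ≠ ⟨0, by omega⟩ := by simp [Fin.ext_iff]
    simp only [Pi.sub_apply, Function.update_self, Function.update_of_ne h10, sub_self] at hmono
    linarith
  · rintro hv0 u hu hanti
    refine fun a b _ ↦ ?_
    have hu0 := (hu.1 ⟨0, by omega⟩).2
    calc (u - v) a ≤ (u - v) ⟨0, by omega⟩ := hanti (Nat.zero_le _)
      _ ≤ (u - v) ⟨n - 1, by omega⟩ := by
        simp only [Pi.sub_apply, hu.2.2, hv.2.2, hv0, sub_self]
        linarith
      _ ≤ (u - v) b := hanti (Nat.le_sub_one_of_lt b.isLt)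
end

section
/- Let n ≥ 4, and let φ be a mechanism that is strategy-proof, envy-free, and contention-free efficient. Label the objects a_1,…,a_n, and let F^n be the family of preference profiles ≻ such that: each of agents 1, 2, 3 ranks the objects a_1, a_2, a_3 (in some order) in her top three positions, followed by a_4, a_5, …, a_n in this order; and each agent i with 4 ≤ i ≤ n has the preference a_i ≻_i a_{i+1} ≻_i … ≻_i a_n ≻_i a_1 ≻_i a_2 ≻_i … ≻_i a_{i−1}. Then for every profile ≻ ∈ F^n, every agent i ∈ {1,2,3}, and every j ∈ {4,…,n}, φ(≻)_{i,a_j} = 0. -/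
open Finset

/-- A profile is contention-free if all agents' top objects are distinct. -/
def ContentionFree {n : ℕ} (hn : 0 < n) (prof : Fin n → Pref n) : Prop :=
  ∀ i j : Fin n, (prof i).symm ⟨0, hn⟩ = (prof j).symm ⟨0, hn⟩ → i = j

/-- A mechanism is contention-free efficient if at every contention-free profile
every agent fully receives her top object. -/
def ContentionFreeEfficient {n : ℕ} (hn : 0 < n)
    (φ : (Fin n → Pref n) → Matrix (Fin n) (Fin n) ℝ) : Prop :=
  ∀ prof : Fin n → Pref n, ContentionFree hn prof →
    ∀ i : Fin n, φ prof i ((prof i).symm ⟨0, hn⟩) = 1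

/-- Membership in the family `F^n` of profiles: agents `1, 2, 3` (indices `0, 1, 2`)
rank objects `a_1, a_2, a_3` (indices `0, 1, 2`) in some order in the top three
positions followed by `a_4, …, a_n` in order, while each agent `i ≥ 4` (index
`i ≥ 3`) has the cyclic preference `a_i ≻ a_{i+1} ≻ … ≻ a_n ≻ a_1 ≻ … ≻ a_{i-1}`. -/
def InFamilyF {n : ℕ} (prof : Fin n → Pref n) : Prop :=
  (∀ i : Fin n, (i : ℕ) < 3 → ∀ k : Fin n, 3 ≤ (k : ℕ) → (prof i).symm k = k) ∧
  (∀ i : Fin n, 3 ≤ (i : ℕ) →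
    ∀ o : Fin n, ((prof i) o : ℕ) = ((o : ℕ) + n - (i : ℕ)) % n)

namespace FamFAux

variable {n : ℕ}

/-- Sum of an allocation over the objects `0,1,2`. -/
def S (p : Fin n → ℝ) : ℝ := ∑ o ∈ Finset.univ.filter (fun o : Fin n => (o : ℕ) ≤ 2), p o

lemma top3_filter (hn : 2 < n) (r : Pref n)
    (h : ∀ k : Fin n, 3 ≤ (k : ℕ) → r.symm k = k) :
    Finset.univ.filter (fun o => r o ≤ r (r.symm ⟨2, hn⟩)) =
      Finset.univ.filter (fun o : Fin n => (o : ℕ) ≤ 2) := by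
  ext o
  simp only [mem_filter, mem_univ, true_and, Equiv.apply_symm_apply, Fin.le_def]
  constructor
  · intro hro
    by_contra ho
    push_neg at ho
    have h1 : r.symm o = o := h o (by omega)
    have h2 := congrArg r h1
    rw [Equiv.apply_symm_apply] at h2
    have := congrArg Fin.val h2
    omega
  · intro ho
    by_contra hro
    push_neg at hro
    have h1 := h (r o) (by omega)
    rw [Equiv.symm_apply_apply] at h1
    have := congrArg Fin.val h1
    omega

lemma upperSum_top3 (hn : 2 < n) (r : Pref n)
    (h : ∀ k : Fin n, 3 ≤ (k : ℕ) → r.symm k = k) (p : Fin n → ℝ) :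
    upperSum r p (r.symm ⟨2, hn⟩) = S p := by
  unfold upperSum S
  rw [top3_filter hn r h]

lemma S_le_one (p : Fin n → ℝ) (hpos : ∀ a, 0 ≤ p a) (hsum : ∑ a, p a = 1) :
    S p ≤ 1 := by
  rw [← hsum]
  exact Finset.sum_le_sum_of_subset_of_nonneg (filter_subset _ _) (fun i _ _ => hpos i)

lemma S_eq_one (p : Fin n → ℝ) (hpos : ∀ a, 0 ≤ p a) (hsum : ∑ a, p a = 1)
    (j : Fin n) (hj : (j : ℕ) ≤ 2) (hpj : p j = 1) : S p = 1 := by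
  refine le_antisymm (S_le_one p hpos hsum) ?_
  rw [← hpj]
  exact Finset.single_le_sum (fun i _ => hpos i) (by simp [hj])

lemma zero_of_S_one (p : Fin n → ℝ) (hpos : ∀ a, 0 ≤ p a) (hsum : ∑ a, p a = 1)
    (hS : S p = 1) (j : Fin n) (hj : 3 ≤ (j : ℕ)) : p j = 0 := by
  have hsplit := Finset.sum_filter_add_sum_filter_not Finset.univ
    (fun o : Fin n => (o : ℕ) ≤ 2) p
  rw [hsum] at hsplit
  have h0 : ∑ o ∈ Finset.univ.filter (fun o : Fin n => ¬ (o : ℕ) ≤ 2), p o = 0 := by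
    have hS' : S p = ∑ o ∈ Finset.univ.filter (fun o : Fin n => (o : ℕ) ≤ 2), p o := rfl
    linarith [hS' ▸ hS]
  exact (Finset.sum_eq_zero_iff_of_nonneg (fun i _ => hpos i)).mp h0 j (by simp; omega)

/-- Strategy-proofness invariance: deviating within the class of preferences that
rank objects `≥ 3` at their own ranks preserves the sum over `{0,1,2}`. -/
lemma sp_invariance (hn : 2 < n) (φ : (Fin n → Pref n) → Matrix (Fin n) (Fin n) ℝ)
    (hsp : StrategyProof φ) (prof : Fin n → Pref n) (i : Fin n) (r' : Pref n)
    (h1 : ∀ k : Fin n, 3 ≤ (k : ℕ) → (prof i).symm k = k)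
    (h2 : ∀ k : Fin n, 3 ≤ (k : ℕ) → r'.symm k = k) :
    S (φ (Function.update prof i r') i) = S (φ prof i) := by
  have d1 := hsp prof i r' ((prof i).symm ⟨2, hn⟩)
  rw [upperSum_top3 hn _ h1, upperSum_top3 hn _ h1] at d1
  have d2 := hsp (Function.update prof i r') i (prof i)
  rw [Function.update_idem, Function.update_eq_self] at d2
  have d2' := d2 (r'.symm ⟨2, hn⟩)
  rw [Function.update_self] at d2'
  rw [upperSum_top3 hn _ h2, upperSum_top3 hn _ h2] at d2'
  exact le_antisymm d1 d2'

/-- Envy-freeness propagation: if agent `j` has total weight 1 on `{0,1,2}`,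
so does any agent `i` whose top three objects are `{0,1,2}`. -/
lemma ef_propagation (hn : 2 < n) (φ : (Fin n → Pref n) → Matrix (Fin n) (Fin n) ℝ)
    (hmech : IsMechanism φ) (hef : EnvyFree φ) (prof : Fin n → Pref n) (i j : Fin n)
    (hi : ∀ k : Fin n, 3 ≤ (k : ℕ) → (prof i).symm k = k)
    (hj : S (φ prof j) = 1) : S (φ prof i) = 1 := by
  have d := hef prof i j ((prof i).symm ⟨2, hn⟩)
  rw [upperSum_top3 hn _ hi, upperSum_top3 hn _ hi] at d
  have hle := S_le_one (φ prof i) (fun a => (hmech prof).1 i a) ((hmech prof).2.1 i)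
  linarith [hj ▸ d]

end FamFAux

/-- In a strategy-proof, envy-free and contention-free efficient mechanism, at any
profile of the family `F^n` the first three agents get zero probability of any of
the objects `a_4, …, a_n`. -/
theorem familyF_zero_allocation (n : ℕ) (hn : 4 ≤ n)
    (φ : (Fin n → Pref n) → Matrix (Fin n) (Fin n) ℝ) (hmech : IsMechanism φ)
    (hsp : StrategyProof φ) (hef : EnvyFree φ)
    (hcfe : ContentionFreeEfficient (by omega) φ) :
    ∀ prof : Fin n → Pref n, InFamilyF prof →
      ∀ i : Fin n, (i : ℕ) < 3 → ∀ j : Fin n, 3 ≤ (j : ℕ) → φ prof i j = 0 := by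
  intro prof hF i hi j hj
  have h2n : 2 < n := by omega
  have h0n : 0 < n := by omega
  -- the three special agents / objects
  set i0 : Fin n := ⟨0, h0n⟩ with hi0
  set i1 : Fin n := ⟨1, by omega⟩ with hi1
  set i2 : Fin n := ⟨2, h2n⟩ with hi2
  have ne01 : i0 ≠ i1 := by simp [hi0, hi1, Fin.ext_iff]
  have ne02 : i0 ≠ i2 := by simp [hi0, hi2, Fin.ext_iff]
  have ne12 : i1 ≠ i2 := by simp [hi1, hi2, Fin.ext_iff]
  -- canonical reports
  set r0 : Pref n := Equiv.refl (Fin n) with hr0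
  set r1 : Pref n := Equiv.swap i0 i1 with hr1
  set r2 : Pref n := Equiv.swap i0 i2 with hr2
  have tr0 : ∀ k : Fin n, 3 ≤ (k : ℕ) → r0.symm k = k := by intro k _; simp [hr0]
  have tr1 : ∀ k : Fin n, 3 ≤ (k : ℕ) → r1.symm k = k := by
    intro k hk
    simp only [hr1, Equiv.symm_swap]
    exact Equiv.swap_apply_of_ne_of_ne (by simp [hi0, Fin.ext_iff]; omega)
      (by simp [hi1, Fin.ext_iff]; omega)
  have tr2 : ∀ k : Fin n, 3 ≤ (k : ℕ) → r2.symm k = k := by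
    intro k hk
    simp only [hr2, Equiv.symm_swap]
    exact Equiv.swap_apply_of_ne_of_ne (by simp [hi0, Fin.ext_iff]; omega)
      (by simp [hi2, Fin.ext_iff]; omega)
  have t0 : ∀ k : Fin n, 3 ≤ (k : ℕ) → (prof i0).symm k = k := hF.1 i0 (by simp [hi0])
  have t1 : ∀ k : Fin n, 3 ≤ (k : ℕ) → (prof i1).symm k = k := hF.1 i1 (by simp [hi1])
  have t2 : ∀ k : Fin n, 3 ≤ (k : ℕ) → (prof i2).symm k = k := hF.1 i2 (by simp [hi2])
  -- the chain of profiles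
  set P1 : Fin n → Pref n := Function.update prof i0 r0 with hP1
  set P2 : Fin n → Pref n := Function.update P1 i1 r1 with hP2
  set P3 : Fin n → Pref n := Function.update P2 i2 r2 with hP3
  have eP1i0 : P1 i0 = r0 := Function.update_self _ _ _
  have eP2i0 : P2 i0 = r0 := by rw [hP2, Function.update_of_ne ne01, eP1i0]
  have eP2i1 : P2 i1 = r1 := Function.update_self _ _ _
  have eP2i2 : P2 i2 = prof i2 := by
    rw [hP2, Function.update_of_ne ne12.symm, hP1, Function.update_of_ne ne02.symm]
  have eP1i1 : P1 i1 = prof i1 := Function.update_of_ne ne01.symm _ _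
  have eP1i2 : P1 i2 = prof i2 := Function.update_of_ne ne02.symm _ _
  have eP3i0 : P3 i0 = r0 := by rw [hP3, Function.update_of_ne ne02, eP2i0]
  have eP3i1 : P3 i1 = r1 := by rw [hP3, Function.update_of_ne ne12, eP2i1]
  have eP3i2 : P3 i2 = r2 := Function.update_self _ _ _
  have eP3hi : ∀ m : Fin n, 3 ≤ (m : ℕ) → P3 m = prof m := by
    intro m hm
    rw [hP3, Function.update_of_ne (by simp [hi2, Fin.ext_iff]; omega),
      hP2, Function.update_of_ne (by simp [hi1, Fin.ext_iff]; omega),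
      hP1, Function.update_of_ne (by simp [hi0, Fin.ext_iff]; omega)]
  have hcase : ∀ m : Fin n, (m : ℕ) < 3 → m = i0 ∨ m = i1 ∨ m = i2 := by
    intro m hm
    rcases m with ⟨v, hv⟩
    simp only [hi0, hi1, hi2, Fin.ext_iff]
    simp only [Fin.val_mk] at hm ⊢
    omega
  -- every agent's top object at P3 is her own index
  have htop : ∀ m : Fin n, (P3 m).symm ⟨0, h0n⟩ = m := by
    intro m
    rcases lt_or_ge (m : ℕ) 3 with hm | hm
    · have e0 : (⟨0, h0n⟩ : Fin n) = i0 := rfl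
      rcases hcase m hm with rfl | rfl | rfl
      · rw [eP3i0, e0]; simp [hr0]
      · rw [eP3i1, hr1, Equiv.symm_swap, e0, Equiv.swap_apply_left]
      · rw [eP3i2, hr2, Equiv.symm_swap, e0, Equiv.swap_apply_left]
    · rw [eP3hi m hm, Equiv.symm_apply_eq]
      have hFm := hF.2 m hm m
      have hval : ((prof m) m : ℕ) = 0 := by
        have e1 : (m : ℕ) + n - (m : ℕ) = n := by omega
        rw [hFm, e1, Nat.mod_self]
      exact Fin.ext (by simp [hval])
  have hcf : ContentionFree h0n P3 := by
    intro a b hab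
    rw [htop a, htop b] at hab
    exact hab
  have hone := hcfe P3 hcf
  -- S = 1 at P3 for the three agents
  have hS3 : ∀ m : Fin n, (m : ℕ) < 3 → FamFAux.S (φ P3 m) = 1 := by
    intro m hm
    have hm1 := hone m
    rw [htop m] at hm1
    exact FamFAux.S_eq_one _ (fun a => (hmech P3).1 m a) ((hmech P3).2.1 m) m
      (by omega) hm1
  -- step back to P2
  have hS2i2 : FamFAux.S (φ P2 i2) = 1 := by
    have hinv := FamFAux.sp_invariance h2n φ hsp P2 i2 r2 (eP2i2 ▸ t2) tr2
    rw [← hP3] at hinv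
    rw [← hinv]
    exact hS3 i2 (by simp [hi2])
  have hS2 : ∀ m : Fin n, (m : ℕ) < 3 → FamFAux.S (φ P2 m) = 1 := by
    intro m hm
    have hok : ∀ k : Fin n, 3 ≤ (k : ℕ) → (P2 m).symm k = k := by
      rcases hcase m hm with rfl | rfl | rfl
      · rw [eP2i0]; exact tr0
      · rw [eP2i1]; exact tr1
      · rw [eP2i2]; exact t2
    exact FamFAux.ef_propagation h2n φ hmech hef P2 m i2 hok hS2i2
  -- step back to P1
  have hS1i1 : FamFAux.S (φ P1 i1) = 1 := by
    have hinv := FamFAux.sp_invariance h2n φ hsp P1 i1 r1 (eP1i1 ▸ t1) tr1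
    rw [← hP2] at hinv
    rw [← hinv]
    exact hS2 i1 (by simp [hi1])
  have hS1 : ∀ m : Fin n, (m : ℕ) < 3 → FamFAux.S (φ P1 m) = 1 := by
    intro m hm
    have hok : ∀ k : Fin n, 3 ≤ (k : ℕ) → (P1 m).symm k = k := by
      rcases hcase m hm with rfl | rfl | rfl
      · rw [eP1i0]; exact tr0
      · rw [eP1i1]; exact t1
      · rw [eP1i2]; exact t2
    exact FamFAux.ef_propagation h2n φ hmech hef P1 m i1 hok hS1i1
  -- step back to prof
  have hS0i0 : FamFAux.S (φ prof i0) = 1 := by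
    have hinv := FamFAux.sp_invariance h2n φ hsp prof i0 r0 t0 tr0
    rw [← hP1] at hinv
    rw [← hinv]
    exact hS1 i0 (by simp [hi0])
  have hS0 : FamFAux.S (φ prof i) = 1 :=
    FamFAux.ef_propagation h2n φ hmech hef prof i i0 (hF.1 i hi) hS0i0
  exact FamFAux.zero_of_S_one _ (fun a => (hmech prof).1 i a) ((hmech prof).2.1 i)
    hS0 j hj
end

section
/- Every envy-free pairwise exchange mechanism weakly dominates the equal division mechanism: if φ^f is an envy-free pairwise exchange mechanism, then for every preference profile ≻ and every agent i, the allocation φ^f(≻)_i stochastically dominates the uniform allocation (assigning probability 1/n to every object) with respect to ≻_i. -/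
open Finset

theorem upperSum_const {n : ℕ} (r : Pref n) (c : ℝ) (a : Fin n) :
    upperSum r (fun _ => c) a = #{o | r o ≤ r a} * c := by
  simp [upperSum]

theorem sum_upperSum_eq_card {n : ℕ} (r : Pref n) {P : Matrix (Fin n) (Fin n) ℝ}
    (hcol : ∀ a, ∑ i, P i a = 1) (a : Fin n) :
    ∑ j, upperSum r (P j) a = #{o | r o ≤ r a} := by
  unfold upperSum
  exact Finset.sum_comm.trans (by simp [hcol])

/-- Column sums of `1` make the rows average out to the uniform allocation, and a row that
dominates every row dominates their average. -/
theorem stochDom_uniform_of_forall_stochDom {n : ℕ} (r : Pref n)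
    {P : Matrix (Fin n) (Fin n) ℝ} (hcol : ∀ a, ∑ i, P i a = 1) {i : Fin n}
    (hdom : ∀ j, StochDom r (P i) (P j)) :
    StochDom r (P i) (fun _ => 1 / (n : ℝ)) := by
  intro a
  have hn : (0 : ℝ) < n := Nat.cast_pos.mpr i.pos
  have hcard : (#{o | r o ≤ r a} : ℝ) ≤ n * upperSum r (P i) a :=
    calc (#{o | r o ≤ r a} : ℝ) = ∑ j, upperSum r (P j) a := (sum_upperSum_eq_card r hcol a).symm
      _ ≤ ∑ _j : Fin n, upperSum r (P i) a := Finset.sum_le_sum fun j _ => hdom j a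
      _ = n * upperSum r (P i) a := by simp
  rw [upperSum_const, mul_one_div, div_le_iff₀ hn]
  linarith

theorem ef_pairwise_dominates_equal_division_general (n : ℕ)
    (f : Pref n → Pref n → Fin n → ℝ)
    (hmech : IsMechanism (phiF f)) (hef : EnvyFree (phiF f)) :
    ∀ (prof : Fin n → Pref n) (i : Fin n),
      StochDom (prof i) (phiF f prof i) (fun _ => 1 / (n : ℝ)) :=
  fun prof i => stochDom_uniform_of_forall_stochDom (prof i) (hmech prof).2.2 (hef prof i)

/-- Every envy-free pairwise exchange mechanism weakly dominates equal division:
each agent's allocation stochastically dominates the uniform allocation with respect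
to her own preference. -/
theorem ef_pairwise_dominates_equal_division (n : ℕ) (hn : 3 ≤ n)
    (f : Pref n → Pref n → Fin n → ℝ) (hf : TransferBounded f)
    (hmech : IsMechanism (phiF f)) (hef : EnvyFree (phiF f)) :
    ∀ (prof : Fin n → Pref n) (i : Fin n),
      StochDom (prof i) (phiF f prof i) (fun _ => 1 / (n : ℝ)) :=
  ef_pairwise_dominates_equal_division_general n f hmech hef
end
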